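/- Let N₁, N₂, N₃, N₄ be the symmetric 5×5 integer matrices N₁ = [[3,−1,−1,−1,−1],[−1,4,−1,−1,0],[−1,−1,3,1,−1],[−1,−1,1,3,−1],[−1,0,−1,−1,4]], N₂ = [[6,−2,−2,−2,−2],[−2,6,−1,−1,0],[−2,−1,4,1,−1],[−2,−1,1,4,−1],[−2,0,−1,−1,6]], N₃ = [[2,0,−1,−1,−1],[0,2,−1,−1,0],[−1,−1,2,1,0],[−1,−1,1,2,0],[−1,0,0,0,2]], N₄ = [[5,−1,−2,−2,−2],[−1,4,−1,−1,0],[−2,−1,3,1,0],[−2,−1,1,3,0],[−2,0,0,0,4]]. Then N₁ + N₄ = N₂ + N₃, the real linear span of {N₁, N₂, N₃, N₄} has dimension exactly 3, and for each i the matrix Nᵢ is not a linear combination with nonnegative real coefficients of the other three. (Hence the cone ∑ᵢ ℝ≥0·Nᵢ is a 3-dimensional non-simplicial polyhedral cone.) -/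

import Mathlib

open Matrix

/-- The four generators of a second `3`-dimensional non-simplicial cone in the second
Voronoi decomposition for `g = 5`. -/
def voronoiCone2 : Fin 4 → Matrix (Fin 5) (Fin 5) ℝ :=
  ![!![3, -1, -1, -1, -1;
      -1, 4, -1, -1, 0;
      -1, -1, 3, 1, -1;
      -1, -1, 1, 3, -1;
      -1, 0, -1, -1, 4],
    !![6, -2, -2, -2, -2;
      -2, 6, -1, -1, 0;
      -2, -1, 4, 1, -1;
      -2, -1, 1, 4, -1;
      -2, 0, -1, -1, 6],
    !![2, 0, -1, -1, -1;
      0, 2, -1, -1, 0;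
      -1, -1, 2, 1, 0;
      -1, -1, 1, 2, 0;
      -1, 0, 0, 0, 2],
    !![5, -1, -2, -2, -2;
      -1, 4, -1, -1, 0;
      -2, -1, 3, 1, 0;
      -2, -1, 1, 3, 0;
      -2, 0, 0, 0, 4]]

/-!
Since `N₂, N₃, N₄` are linearly independent and `N₁ = N₂ + N₃ - N₄`, the linear relations
`∑ aⱼ Nⱼ = 0` are exactly the multiples of `(1, -1, -1, 1)`. Writing `Nᵢ` as a nonnegative
combination of the others gives such a relation with `aᵢ = -1` and `aⱼ ≥ 0` for `j ≠ i`,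
which no multiple of `(1, -1, -1, 1)` has: the four generators span a cone over a quadrilateral.
-/

section Quadrilateral

variable {K V : Type*} [Field K] [AddCommGroup V] [Module K V] {v : Fin 4 → V}

theorem eq_of_sum_smul_eq_zero_of_add_eq_add
    (hv : LinearIndependent K (Fin.tail v)) (hsq : v 0 + v 3 = v 1 + v 2)
    {a : Fin 4 → K} (ha : ∑ j, a j • v j = 0) : a 1 = -a 0 ∧ a 2 = -a 0 ∧ a 3 = a 0 := by
  have hcoord := Fintype.linearIndependent_iff.mp hv ![a 1 + a 0, a 2 + a 0, a 3 - a 0] (by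
    simp only [Fin.sum_univ_four, Fin.sum_univ_three] at ha ⊢
    simp only [Fin.tail, Fin.succ_zero_eq_one, Fin.succ_one_eq_two, Fin.reduceSucc,
      cons_val_zero, cons_val_one, cons_val]
    linear_combination (norm := module) ha - a 0 • hsq)
  have h1 : a 1 + a 0 = 0 := hcoord 0
  have h2 : a 2 + a 0 = 0 := hcoord 1
  have h3 : a 3 - a 0 = 0 := hcoord 2
  exact ⟨by linear_combination h1, by linear_combination h2, by linear_combination h3⟩

theorem finrank_span_range_of_add_eq_add
    (hv : LinearIndependent K (Fin.tail v)) (hsq : v 0 + v 3 = v 1 + v 2) :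
    Module.finrank K (Submodule.span K (Set.range v)) = 3 := by
  have h0 : v 0 ∈ Submodule.span K (Set.range (Fin.tail v)) := by
    rw [eq_sub_of_add_eq hsq]
    exact Submodule.sub_mem _ (Submodule.add_mem _ (Submodule.subset_span ⟨0, rfl⟩)
      (Submodule.subset_span ⟨1, rfl⟩)) (Submodule.subset_span ⟨2, rfl⟩)
  rw [Fin.range_fin_succ, Submodule.span_insert_eq_span h0, finrank_span_eq_card hv,
    Fintype.card_fin]

theorem not_exists_nonneg_sum_erase_of_add_eq_add [LinearOrder K] [IsStrictOrderedRing K]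
    (hv : LinearIndependent K (Fin.tail v)) (hsq : v 0 + v 3 = v 1 + v 2) (i : Fin 4) :
    ¬ ∃ c : Fin 4 → K, (∀ j, 0 ≤ c j) ∧ v i = ∑ j ∈ Finset.univ.erase i, c j • v j := by
  rintro ⟨c, hc, hi⟩
  have ha : ∑ j, Function.update c i (-1) j • v j = 0 := by
    rw [← Finset.add_sum_erase _ _ (Finset.mem_univ i), Function.update_self, neg_one_smul,
      neg_add_eq_zero, hi]
    refine Finset.sum_congr rfl fun j hj => ?_
    rw [Function.update_of_ne (Finset.ne_of_mem_erase hj)]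
  obtain ⟨h1, h2, h3⟩ := eq_of_sum_smul_eq_zero_of_add_eq_add hv hsq ha
  fin_cases i <;>
    simp only [Function.update_apply, Fin.reduceFinMk, Fin.reduceEq, Fin.zero_eta, Fin.mk_one,
      ite_true, ite_false] at h1 h2 h3 <;>
    linarith [hc 0, hc 1, hc 2, hc 3]

end Quadrilateral

theorem voronoiCone2_zero_add_three :
    voronoiCone2 0 + voronoiCone2 3 = voronoiCone2 1 + voronoiCone2 2 := by
  simp only [voronoiCone2, cons_val]
  ext i j
  fin_cases i <;> fin_cases j <;> norm_num

theorem linearIndependent_tail_voronoiCone2 : LinearIndependent ℝ (Fin.tail voronoiCone2) := by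
  refine Fintype.linearIndependent_iff.mpr fun g hg => ?_
  have entry (r s : Fin 5) :
      g 0 * voronoiCone2 1 r s + g 1 * voronoiCone2 2 r s + g 2 * voronoiCone2 3 r s = 0 := by
    simpa [Fin.sum_univ_three, Fin.tail] using congrFun (congrFun hg r) s
  have e00 := entry 0 0
  have e01 := entry 0 1
  have e11 := entry 1 1
  simp only [voronoiCone2, of_apply, cons_val', cons_val_zero, cons_val_one, cons_val,
    cons_val_fin_one] at e00 e01 e11
  have h0 : g 0 = 0 := by linarith
  have h1 : g 1 = 0 := by linarith
  have h2 : g 2 = 0 := by linarith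
  intro i
  fin_cases i <;> assumption

/-- The matrices `N₁, N₂, N₃, N₄` satisfy `N₁ + N₄ = N₂ + N₃`, their real span has
dimension exactly `3`, and none of them is a nonnegative real linear combination of
the other three: the cone `∑ᵢ ℝ₊ Nᵢ` is a `3`-dimensional non-simplicial polyhedral
cone. -/
theorem voronoiCone2_non_simplicial :
    voronoiCone2 0 + voronoiCone2 3 = voronoiCone2 1 + voronoiCone2 2 ∧
    Module.finrank ℝ (Submodule.span ℝ (Set.range voronoiCone2)) = 3 ∧
    ∀ i : Fin 4, ¬ ∃ c : Fin 4 → ℝ, (∀ j, 0 ≤ c j) ∧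
      voronoiCone2 i = ∑ j ∈ Finset.univ.erase i, c j • voronoiCone2 j :=
  ⟨voronoiCone2_zero_add_three,
    finrank_span_range_of_add_eq_add linearIndependent_tail_voronoiCone2
      voronoiCone2_zero_add_three,
    not_exists_nonneg_sum_erase_of_add_eq_add linearIndependent_tail_voronoiCone2
      voronoiCone2_zero_add_three⟩
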